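/- For real b > 0, the series ∑_{n=0}^∞ ((1/2)_n / n!) · 1/(1 + n/b)^2 equals π^{1/2} b^2 Γ(b) (ψ(b + 1/2) − ψ(b)) / Γ(b + 1/2), where ψ is the digamma function. -/

import Mathlib

open Real BigOperators

noncomputable def poch (a : ℝ) (n : ℕ) : ℝ := ∏ i ∈ Finset.range n, (a + i)

noncomputable def digamma (x : ℝ) : ℝ := deriv Real.Gamma x / Real.Gamma x

/-!
The numbers `(1/2)_n / n!` are the coefficients of the binomial series of `(1 - t)^(-1/2)`.
Integrating `t^(b-1) (1 - t)^(-1/2)` over `(0, 1)` termwise therefore gives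
`∑ (1/2)_n / n! / (b + n) = B(b, 1/2) = √π Γ(b) / Γ(b + 1/2)`, and differentiating this
identity in `b` gives `∑ (1/2)_n / n! / (b + n)^2`, which is the series of the theorem divided
by `b^2`; the logarithmic derivatives of `Γ` produce the digamma difference. Termwise
integration is justified by `(1/2)_n / n! ≤ (n + 1)^(-1/2)`, termwise differentiation by
`(1/2)_n / n! ≤ 1`.
-/

open MeasureTheory Set

lemma poch_succ (a : ℝ) (n : ℕ) : poch a (n + 1) = poch a n * (a + n) :=
  Finset.prod_range_succ _ n

lemma poch_eq_ascPochhammer_eval (a : ℝ) (n : ℕ) : poch a n = (ascPochhammer ℝ n).eval a := by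
  induction n with
  | zero => simp [poch]
  | succ n ih => rw [poch_succ, ih, ascPochhammer_succ_eval]

lemma poch_div_factorial_eq_choose (a : ℝ) (n : ℕ) :
    poch a n / n.factorial = Ring.choose (a + n - 1) n := by
  rw [← Ring.multichoose_eq, div_eq_iff (by positivity), poch_eq_ascPochhammer_eval,
    ← Polynomial.ascPochhammer_smeval_eq_eval,
    ← Ring.factorial_nsmul_multichoose_eq_ascPochhammer, nsmul_eq_mul, mul_comm]

lemma hasSum_poch_div_factorial_mul_pow (a : ℝ) {x : ℝ} (hx : |x| < 1) :
    HasSum (fun n => poch a n / n.factorial * x ^ n) ((1 - x) ^ (-a)) := by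
  have hx' : x ∈ Metric.eball (0 : ℝ) 1 := by
    rwa [Metric.mem_eball, edist_zero_right, ← ofReal_norm, ENNReal.ofReal_lt_one]
  have h := (one_div_one_sub_rpow_hasFPowerSeriesOnBall_zero a).hasSum hx'
  simp only [FormalMultilinearSeries.ofScalars_apply_eq, zero_add, smul_eq_mul] at h
  rw [rpow_neg (by linarith [(abs_lt.1 hx).2]), ← one_div]
  simpa only [poch_div_factorial_eq_choose] using h

lemma integral_Ioo_rpow {s : ℝ} (hs : -1 < s) :
    ∫ t in Ioo (0 : ℝ) 1, t ^ s = 1 / (s + 1) := by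
  rw [← integral_Ioc_eq_integral_Ioo, ← intervalIntegral.integral_of_le zero_le_one,
    integral_rpow (Or.inl hs), one_rpow, zero_rpow (by linarith), sub_zero]

lemma integral_rpow_mul_one_sub_rpow {a c : ℝ} (ha : 0 < a) (hc : 0 < c) :
    ∫ t in Ioo (0 : ℝ) 1, t ^ (a - 1) * (1 - t) ^ (c - 1) =
      Gamma a * Gamma c / Gamma (a + c) := by
  rw [← ProbabilityTheory.beta, ProbabilityTheory.beta_eq_betaIntegralReal a c ha hc,
    Complex.betaIntegral, intervalIntegral.integral_of_le zero_le_one,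
    ← integral_Ioc_eq_integral_Ioo, ← RCLike.re_to_complex, ← integral_re]
  · refine setIntegral_congr_fun measurableSet_Ioc fun t ⟨ht0, ht1⟩ ↦ ?_
    norm_cast
    rw [← Complex.ofReal_cpow ht0.le, ← Complex.ofReal_cpow (by linarith), RCLike.re_to_complex,
      Complex.re_mul_ofReal, Complex.ofReal_re]
  · exact (intervalIntegrable_iff_integrableOn_Ioc_of_le zero_le_one).1
      (Complex.betaIntegral_convergent (by simpa) (by simpa))

lemma hasDerivAt_Gamma_of_pos {x : ℝ} (hx : 0 < x) :
    HasDerivAt Gamma (Gamma x * digamma x) x := by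
  rw [digamma, mul_div_cancel₀ _ (Gamma_pos_of_pos hx).ne']
  exact (differentiableAt_Gamma fun m => by linarith [(m.cast_nonneg : (0 : ℝ) ≤ m)]).hasDerivAt

lemma natCast_add_one_le_mul_add {b : ℝ} (hb : 0 < b) (n : ℕ) :
    (n : ℝ) + 1 ≤ (1 + b⁻¹) * (b + n) := by
  have h1 : b⁻¹ * b = 1 := inv_mul_cancel₀ hb.ne'
  have h2 : 0 ≤ b⁻¹ * n := by positivity
  nlinarith

noncomputable def halfCoeff (n : ℕ) : ℝ := poch (1 / 2) n / n.factorial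

lemma halfCoeff_succ (n : ℕ) : halfCoeff (n + 1) = halfCoeff n * ((n + 1 / 2) / (n + 1)) := by
  simp only [halfCoeff, poch_succ, Nat.factorial_succ]
  push_cast
  field_simp
  ring

lemma halfCoeff_pos (n : ℕ) : 0 < halfCoeff n :=
  div_pos (Finset.prod_pos fun _ _ => by positivity) (by positivity)

lemma halfCoeff_sq_mul_le_one (n : ℕ) : halfCoeff n ^ 2 * (n + 1) ≤ 1 := by
  induction n with
  | zero => simp [halfCoeff, poch]
  | succ n ih =>
    have hratio : ((n : ℝ) + 1 / 2) ^ 2 * (n + 2) / (n + 1) ^ 3 ≤ 1 := by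
      rw [div_le_one (by positivity)]
      nlinarith
    calc halfCoeff (n + 1) ^ 2 * ((n + 1 : ℕ) + 1 : ℝ)
        = halfCoeff n ^ 2 * (n + 1) * (((n : ℝ) + 1 / 2) ^ 2 * (n + 2) / (n + 1) ^ 3) := by
          rw [halfCoeff_succ]
          push_cast
          field_simp
          ring
      _ ≤ 1 * 1 := mul_le_mul ih hratio (by positivity) zero_le_one
      _ = 1 := one_mul 1

lemma halfCoeff_le_one (n : ℕ) : halfCoeff n ≤ 1 := by
  have h := halfCoeff_sq_mul_le_one n
  have hsq : halfCoeff n ^ 2 ≤ 1 := by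
    nlinarith [sq_nonneg (halfCoeff n), (n.cast_nonneg : (0 : ℝ) ≤ n)]
  exact (pow_le_one_iff_of_nonneg (halfCoeff_pos n).le two_ne_zero).1 hsq

lemma halfCoeff_le_one_div_sqrt (n : ℕ) : halfCoeff n ≤ 1 / √(n + 1) := by
  rw [le_div_iff₀ (by positivity),
    ← pow_le_one_iff_of_nonneg (mul_nonneg (halfCoeff_pos n).le (sqrt_nonneg _)) two_ne_zero,
    mul_pow, sq_sqrt (by positivity)]
  exact halfCoeff_sq_mul_le_one n

lemma summable_halfCoeff_div {b : ℝ} (hb : 0 < b) :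
    Summable fun n : ℕ => halfCoeff n / (b + n) := by
  have hp : Summable fun n : ℕ => 1 / |(n : ℝ) + 1| ^ (3 / 2 : ℝ) :=
    (summable_one_div_nat_add_rpow 1 _).2 (by norm_num)
  refine Summable.of_nonneg_of_le (fun n => (div_pos (halfCoeff_pos n) (by positivity)).le)
    (fun n => ?_) (hp.mul_left (1 + b⁻¹))
  have hn : (0 : ℝ) < n + 1 := by positivity
  rw [abs_of_pos hn, show (3 / 2 : ℝ) = 1 + 1 / 2 by norm_num, rpow_add hn, rpow_one,
    ← sqrt_eq_rpow]
  calc halfCoeff n / (b + n) ≤ (1 / √(n + 1)) / ((n + 1) / (1 + b⁻¹)) :=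
        div_le_div₀ (by positivity) (halfCoeff_le_one_div_sqrt n) (by positivity)
          ((div_le_iff₀ (by positivity)).2 (by linarith [natCast_add_one_le_mul_add hb n]))
    _ = _ := by field_simp

lemma tsum_halfCoeff_div {b : ℝ} (hb : 0 < b) :
    ∑' n : ℕ, halfCoeff n / (b + n) = √π * Gamma b / Gamma (b + 1 / 2) := by
  have hexp (n : ℕ) : -1 < b - 1 + n := by linarith [(n.cast_nonneg : (0 : ℝ) ≤ n)]
  have hterm (n : ℕ) :
      ∫ t in Ioo (0 : ℝ) 1, halfCoeff n * t ^ (b - 1 + n) = halfCoeff n / (b + n) := by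
    rw [integral_const_mul, integral_Ioo_rpow (hexp n)]
    ring_nf
  have hint (n : ℕ) : IntegrableOn (fun t => halfCoeff n * t ^ (b - 1 + n)) (Ioo 0 1) :=
    ((intervalIntegral.integrableOn_Ioo_rpow_iff zero_lt_one).2 (hexp n)).const_mul _
  have hnorm (n : ℕ) :
      ∫ t in Ioo (0 : ℝ) 1, ‖halfCoeff n * t ^ (b - 1 + n)‖ = halfCoeff n / (b + n) := by
    rw [← hterm n]
    exact setIntegral_congr_fun measurableSet_Ioo fun t ht =>
      norm_of_nonneg (mul_nonneg (halfCoeff_pos n).le (rpow_nonneg ht.1.le _))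
  have hbinom : ∀ t ∈ Ioo (0 : ℝ) 1,
      ∑' n : ℕ, halfCoeff n * t ^ (b - 1 + n) = t ^ (b - 1) * (1 - t) ^ (1 / 2 - 1 : ℝ) := by
    rintro t ⟨ht0, ht1⟩
    have h := (hasSum_poch_div_factorial_mul_pow (1 / 2) (abs_lt.2 ⟨by linarith, ht1⟩)).mul_left
      (t ^ (b - 1))
    rw [show (1 / 2 - 1 : ℝ) = -(1 / 2) by norm_num, ← h.tsum_eq]
    refine tsum_congr fun n => ?_
    rw [rpow_add ht0, rpow_natCast, halfCoeff]
    ring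
  calc ∑' n : ℕ, halfCoeff n / (b + n)
      = ∑' n : ℕ, ∫ t in Ioo (0 : ℝ) 1, halfCoeff n * t ^ (b - 1 + n) :=
        tsum_congr fun n => (hterm n).symm
    _ = ∫ t in Ioo (0 : ℝ) 1, ∑' n : ℕ, halfCoeff n * t ^ (b - 1 + n) :=
        integral_tsum_of_summable_integral_norm hint
          ((summable_halfCoeff_div hb).congr fun n => (hnorm n).symm)
    _ = ∫ t in Ioo (0 : ℝ) 1, t ^ (b - 1) * (1 - t) ^ (1 / 2 - 1 : ℝ) :=
        setIntegral_congr_fun measurableSet_Ioo hbinom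
    _ = √π * Gamma b / Gamma (b + 1 / 2) := by
        rw [integral_rpow_mul_one_sub_rpow hb one_half_pos, Gamma_one_half_eq]
        ring

lemma hasDerivAt_tsum_halfCoeff_div {b : ℝ} (hb : 0 < b) :
    HasDerivAt (fun x => ∑' n : ℕ, halfCoeff n / (x + n))
      (-∑' n : ℕ, halfCoeff n / (b + n) ^ 2) b := by
  have hdom : Summable fun n : ℕ => 1 / |(n : ℝ) + b / 2| ^ (2 : ℝ) :=
    (summable_one_div_nat_add_rpow _ _).2 one_lt_two
  have hb2 : b ∈ Ioi (b / 2) := half_lt_self hb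
  rw [← tsum_neg]
  refine hasDerivAt_tsum_of_isPreconnected hdom isOpen_Ioi isPreconnected_Ioi
    (g' := fun n x => -(halfCoeff n / (x + n) ^ 2)) (fun n x hx => ?_) (fun n x hx => ?_) hb2
    (summable_halfCoeff_div hb) hb2
  · have hx0 : 0 < x := by linarith [half_pos hb, mem_Ioi.1 hx]
    have hxn : x + n ≠ 0 := by positivity
    have h := (hasDerivAt_const x (halfCoeff n)).div ((hasDerivAt_id x).add_const (n : ℝ)) hxn
    rw [id, zero_mul, zero_sub, mul_one, neg_div] at h
    exact h
  · have hx0 : b / 2 < x := hx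
    have hxn : 0 < (n : ℝ) + b / 2 := by positivity
    rw [norm_neg, norm_of_nonneg (div_nonneg (halfCoeff_pos n).le (sq_nonneg _)),
      abs_of_pos hxn, rpow_two]
    calc halfCoeff n / (x + n) ^ 2 ≤ 1 / (x + n) ^ 2 :=
          div_le_div_of_nonneg_right (halfCoeff_le_one n) (sq_nonneg _)
      _ ≤ 1 / (n + b / 2) ^ 2 :=
          one_div_le_one_div_of_le (by positivity) (pow_le_pow_left₀ hxn.le (by linarith) 2)

lemma tsum_halfCoeff_div_sq {b : ℝ} (hb : 0 < b) :
    ∑' n : ℕ, halfCoeff n / (b + n) ^ 2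
      = √π * Gamma b * (digamma (b + 1 / 2) - digamma b) / Gamma (b + 1 / 2) := by
  have hb' : 0 < b + 1 / 2 := by linarith
  have hΓ := (Gamma_pos_of_pos hb').ne'
  have hquot : HasDerivAt (fun x => √π * Gamma x / Gamma (x + 1 / 2))
      ((√π * (Gamma b * digamma b) * Gamma (b + 1 / 2)
        - √π * Gamma b * (Gamma (b + 1 / 2) * digamma (b + 1 / 2))) / Gamma (b + 1 / 2) ^ 2) b :=
    ((hasDerivAt_Gamma_of_pos hb).const_mul √π).div
      ((hasDerivAt_Gamma_of_pos hb').comp_add_const b (1 / 2)) hΓ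
  have hseries : (fun x => ∑' n : ℕ, halfCoeff n / (x + n))
      =ᶠ[nhds b] fun x => √π * Gamma x / Gamma (x + 1 / 2) :=
    Filter.eventually_of_mem (Ioi_mem_nhds hb) fun x hx => tsum_halfCoeff_div hx
  have hderiv := (hasDerivAt_tsum_halfCoeff_div hb).unique (hquot.congr_of_eventuallyEq hseries)
  rw [neg_eq_iff_eq_neg] at hderiv
  rw [hderiv]
  field_simp
  ring

theorem stmt5 (b : ℝ) (hb : 0 < b) :
    ∑' n : ℕ, (poch (1/2) n / n.factorial) * (1 / (1 + n / b) ^ 2) =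
      Real.sqrt π * b ^ 2 * Real.Gamma b * (digamma (b + 1/2) - digamma b) /
        Real.Gamma (b + 1/2) := by
  have hterm (n : ℕ) :
      poch (1 / 2) n / n.factorial * (1 / (1 + n / b) ^ 2) =
        b ^ 2 * (halfCoeff n / (b + n) ^ 2) := by
    have hbn : b + n ≠ 0 := by positivity
    rw [halfCoeff]
    field_simp
  rw [tsum_congr hterm, tsum_mul_left, tsum_halfCoeff_div_sq hb]
  ring
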